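/- Let d ≥ 2, let Γ = (V,E) be a finite simple graph, and let p : V → ℝ^d. Define ρ_p as the graph-of-groups realisation of Γ in the group G = E(d) of surjective isometries of ℝ^d given by ρ_p(v) = Stab_G(p(v)) and ρ_p(e) = Stab_G(p(v)) ∩ Stab_G(p(w)) for e = {v,w}. Then the bar-joint framework (Γ,p) is globally rigid — i.e. every q : V → ℝ^d with ‖q(v)−q(w)‖ = ‖p(v)−p(w)‖ for all edges {v,w} satisfies q = g∘p for some g ∈ E(d) — if and only if ρ_p is globally rigid, i.e. for every motion M of ρ_p there exists σ ∈ G with ρ_p^M(x) = σρ_p(x)σ⁻¹ for all x ∈ V∪E. -/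

import Mathlib

noncomputable abbrev Euc (d : ℕ) := EuclideanSpace ℝ (Fin d)

/-- The Euclidean group `E(d)` of surjective self-isometries of `ℝ^d`. -/
noncomputable abbrev EucGrp (d : ℕ) := Euc d ≃ᵢ Euc d

/-- The stabiliser of a point `x ∈ ℝ^d` in the Euclidean group `E(d)`. -/
noncomputable def Stab {d : ℕ} (x : Euc d) : Subgroup (EucGrp d) where
  carrier := {g | g x = x}
  one_mem' := rfl
  mul_mem' := by
    intro a b ha hb
    simp only [Set.mem_setOf_eq] at *
    show a (b x) = x
    rw [hb, ha]
  inv_mem' := by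
    intro a ha
    simp only [Set.mem_setOf_eq] at *
    show a.symm x = x
    rw [← ha, IsometryEquiv.symm_apply_apply, ha]

/-- Conjugate of a subgroup: `H ↦ gHg⁻¹`. -/
def conjSub {G : Type*} [Group G] (g : G) (H : Subgroup G) : Subgroup G :=
  Subgroup.map (MulAut.conj g).toMonoidHom H

lemma mem_Stab {d : ℕ} {x : Euc d} {g : EucGrp d} : g ∈ Stab x ↔ g x = x := Iff.rfl

lemma conjSub_Stab {d : ℕ} (g : EucGrp d) (x : Euc d) :
    conjSub g (Stab x) = Stab (g x) := by
  ext h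
  constructor
  · rintro ⟨k, hk, rfl⟩
    show (g * k * g⁻¹) (g x) = g x
    simp only [IsometryEquiv.mul_apply, IsometryEquiv.inv_apply_self]
    rw [mem_Stab.mp hk]
  · intro hh
    refine ⟨g⁻¹ * h * g, ?_, ?_⟩
    · show (g⁻¹ * h * g) x = x
      simp only [IsometryEquiv.mul_apply]
      rw [mem_Stab.mp hh, IsometryEquiv.inv_apply_self]
    · show g * (g⁻¹ * h * g) * g⁻¹ = h
      group

lemma Stab_injective {d : ℕ} {x y : Euc d} (h : Stab x = Stab y) : x = y := by
  have hr : ((AffineIsometryEquiv.pointReflection ℝ x).toIsometryEquiv : EucGrp d) ∈ Stab x := by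
    show (AffineIsometryEquiv.pointReflection ℝ x) x = x
    simp
  rw [h] at hr
  have : (AffineIsometryEquiv.pointReflection ℝ x) y = y := hr
  exact (AffineIsometryEquiv.pointReflection_fixed_iff.mp this).symm

lemma conjSub_inf {G : Type*} [Group G] (g : G) (H K : Subgroup G) :
    conjSub g (H ⊓ K) = conjSub g H ⊓ conjSub g K := by
  unfold conjSub
  exact Subgroup.map_inf H K _ (MulAut.conj g).injective

/-- Any two pairs of points at equal distance are related by an isometry of `ℝ^d`. -/
lemma exists_iso {d : ℕ} (a b a' b' : Euc d) (h : ‖a' - b'‖ = ‖a - b‖) :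
    ∃ g : EucGrp d, g a = a' ∧ g b = b' := by
  have h' : ‖a - b‖ = ‖a' - b'‖ := h.symm
  let L : Euc d ≃ₗᵢ[ℝ] Euc d := Submodule.reflection (ℝ ∙ ((a - b) - (a' - b')))ᗮ
  have hL : L (a - b) = a' - b' := Submodule.reflection_sub h'
  refine ⟨((IsometryEquiv.addLeft (-a)).trans L.toIsometryEquiv).trans
      (IsometryEquiv.addLeft a'), ?_, ?_⟩
  · show a' + L (-a + a) = a'
    simp
  · show a' + L (-a + b) = b'
    have : (-a : Euc d) + b = -(a - b) := by abel
    rw [this, map_neg, hL]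
    abel

/-- A `d`-dimensional bar-joint framework `(Γ,p)` (`d ≥ 2`) is
globally rigid (every equivalent framework is congruent to it) iff the associated
graph-of-groups realisation `ρ_p` in `E(d)` is globally rigid (every motion `M` of
`ρ_p` yields a realisation `ρ_p^M` congruent to `ρ_p`, i.e. obtained by conjugating
every group by one fixed `σ ∈ E(d)`). -/
theorem statement_15 (d : ℕ) (hd : 2 ≤ d) {V : Type*} [Fintype V]
    (Γ : SimpleGraph V) (p : V → Euc d) :
    (∀ q : V → Euc d,
        (∀ v w, Γ.Adj v w → ‖q v - q w‖ = ‖p v - p w‖) →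
        ∃ g : EucGrp d, ∀ v, q v = g (p v)) ↔
      (∀ (σv : V → EucGrp d) (σe : Sym2 V → EucGrp d) (σi : V → Sym2 V → EucGrp d),
        (∀ v w, Γ.Adj v w →
          (σi v s(v, w))⁻¹ * σv v ∈ Stab (p v) ∧
          (σi v s(v, w))⁻¹ * σe s(v, w) ∈ Stab (p v) ⊓ Stab (p w)) →
        ∃ σ : EucGrp d,
          (∀ v, conjSub (σv v) (Stab (p v)) = conjSub σ (Stab (p v))) ∧
          (∀ v w, Γ.Adj v w →
            conjSub (σe s(v, w)) (Stab (p v) ⊓ Stab (p w)) =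
              conjSub σ (Stab (p v) ⊓ Stab (p w)))) := by
  classical
  constructor
  · -- framework global rigidity → realisation global rigidity
    intro hrig σv σe σi hmot
    set q : V → Euc d := fun v => σv v (p v) with hq
    -- for each incident pair, σe s(v,w) maps p v to q v
    have key : ∀ v w, Γ.Adj v w → σe s(v, w) (p v) = q v := by
      intro v w hvw
      obtain ⟨h1, h2⟩ := hmot v w hvw
      have e1 : (σi v s(v, w))⁻¹ (σv v (p v)) = p v := h1
      have e2 : (σi v s(v, w))⁻¹ (σe s(v, w) (p v)) = p v := h2.1
      have := e1.trans e2.symm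
      exact ((σi v s(v, w))⁻¹.injective this).symm
    have hequiv : ∀ v w, Γ.Adj v w → ‖q v - q w‖ = ‖p v - p w‖ := by
      intro v w hvw
      have hv : σe s(v, w) (p v) = q v := key v w hvw
      have hw : σe s(v, w) (p w) = q w := by
        have := key w v hvw.symm
        rwa [Sym2.eq_swap] at this
      rw [← hv, ← hw, ← dist_eq_norm, ← dist_eq_norm, IsometryEquiv.dist_eq]
    obtain ⟨g, hg⟩ := hrig q hequiv
    refine ⟨g, ?_, ?_⟩
    · intro v
      rw [conjSub_Stab, conjSub_Stab]
      exact congrArg Stab (hg v)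
    · intro v w hvw
      have hv : σe s(v, w) (p v) = q v := key v w hvw
      have hw : σe s(v, w) (p w) = q w := by
        have := key w v hvw.symm
        rwa [Sym2.eq_swap] at this
      rw [conjSub_inf, conjSub_inf, conjSub_Stab, conjSub_Stab, conjSub_Stab, conjSub_Stab,
        hv, hw, hg v, hg w]
  · -- realisation global rigidity → framework global rigidity
    intro hrig q hequiv
    have goodv : ∀ v : V, ∃ g : EucGrp d, g (p v) = q v := by
      intro v
      obtain ⟨g, hg, -⟩ := exists_iso (p v) (p v) (q v) (q v) (by simp)
      exact ⟨g, hg⟩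
    set good : Sym2 V → Prop := fun e => ∃ g : EucGrp d, ∀ v ∈ e, g (p v) = q v with hgood
    have hadj : ∀ v w, Γ.Adj v w → good s(v, w) := by
      intro v w hvw
      obtain ⟨g, hg1, hg2⟩ := exists_iso (p v) (p w) (q v) (q w) (hequiv v w hvw)
      refine ⟨g, ?_⟩
      intro u hu
      rcases Sym2.mem_iff.mp hu with rfl | rfl
      · exact hg1
      · exact hg2
    set σv : V → EucGrp d := fun v => (goodv v).choose with hσv
    set σe : Sym2 V → EucGrp d := fun e => if h : good e then h.choose else 1 with hσe
    have hσe_spec : ∀ v w, Γ.Adj v w →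
        σe s(v, w) (p v) = q v ∧ σe s(v, w) (p w) = q w := by
      intro v w hvw
      have h := hadj v w hvw
      rw [hσe]
      simp only [dif_pos h]
      exact ⟨h.choose_spec v (by simp), h.choose_spec w (by simp)⟩
    have hmot : ∀ v w, Γ.Adj v w →
        (σe s(v, w))⁻¹ * σv v ∈ Stab (p v) ∧
        (σe s(v, w))⁻¹ * σe s(v, w) ∈ Stab (p v) ⊓ Stab (p w) := by
      intro v w hvw
      obtain ⟨he1, he2⟩ := hσe_spec v w hvw
      constructor
      · show (σe s(v, w))⁻¹ (σv v (p v)) = p v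
        have hv : σv v (p v) = q v := (goodv v).choose_spec
        rw [hv, ← he1, IsometryEquiv.inv_apply_self]
      · rw [inv_mul_cancel]
        exact Subgroup.one_mem _
    obtain ⟨σ, hσ1, -⟩ := hrig σv σe (fun _ e => σe e) hmot
    refine ⟨σ, ?_⟩
    intro v
    have h1 := hσ1 v
    rw [conjSub_Stab, conjSub_Stab] at h1
    have h2 := Stab_injective h1
    have hv : σv v (p v) = q v := (goodv v).choose_spec
    rw [hv] at h2
    exact h2
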